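/- Let k ≥ 3 and consider the k-swap game with k²−2 strategic agents of each type whose topology is the tree with root α, a set B of k(k−1)−1 children of α, and for each β ∈ B a set Γ_β of k leaf children of β. In any assignment v, if two nodes β₁, β₂ ∈ B are occupied by agents of the same type T_x, and agents of some type T_y with y ≠ x simultaneously occupy a node of Γ_{β₁} and a node of Γ_{β₂}, then v is not an equilibrium: some pair of agents can both strictly increase their utility by swapping. -/

import Mathlib

open Finset

namespace SwapGame

/-- Build a simple graph from a (not necessarily symmetric) boolean relation
by symmetrizing it and removing loops. -/
def mkGraph {V : Type*} (r : V → V → Bool) : SimpleGraph V where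
  Adj a b := a ≠ b ∧ (r a b ∨ r b a)
  symm := by
    first
    | (constructor; intro a b h; exact ⟨Ne.symm h.1, Or.symm h.2⟩)
    | (intro a b h; exact ⟨Ne.symm h.1, Or.symm h.2⟩)
  loopless := by
    first
    | (constructor; intro a h; exact h.1 rfl)
    | (intro a h; exact h.1 rfl)

instance mkGraph.instDecidableRel {V : Type*} [DecidableEq V] (r : V → V → Bool) :
    DecidableRel (mkGraph r).Adj :=
  fun a b => inferInstanceAs (Decidable (a ≠ b ∧ (r a b ∨ r b a)))

variable {A V K : Type*} [Fintype V] [DecidableEq A] [DecidableEq V] [DecidableEq K]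

/-- The assignment obtained from `σ` by swapping the locations of agents `i` and `j`. -/
def swapA (σ : A ≃ V) (i j : A) : A ≃ V := (Equiv.swap i j).trans σ

/-- The utility of agent `i` under assignment `σ`: the fraction of the neighbors of the
node of `i` that are occupied by agents of the same type (friends of `i`). -/
def util (G : SimpleGraph V) [DecidableRel G.Adj] (c : A → K) (σ : A ≃ V) (i : A) : ℚ :=
  (((G.neighborFinset (σ i)).filter (fun w => c (σ.symm w) = c i)).card : ℚ) /
    ((G.neighborFinset (σ i)).card : ℚ)

/-- Agents `i` and `j` both strictly increase their utility by swapping their locations. -/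
def improving (G : SimpleGraph V) [DecidableRel G.Adj] (c : A → K) (σ : A ≃ V)
    (i j : A) : Prop :=
  util G c σ i < util G c (swapA σ i j) i ∧ util G c σ j < util G c (swapA σ i j) j

/-- An assignment is an equilibrium if no pair of agents can both strictly increase
their utility by swapping positions. -/
def isEquilibrium (G : SimpleGraph V) [DecidableRel G.Adj] (c : A → K) (σ : A ≃ V) : Prop :=
  ¬ ∃ i j : A, improving G c σ i j

/-- The social welfare of an assignment: the sum of the utilities of all agents. -/
def SW [Fintype A] (G : SimpleGraph V) [DecidableRel G.Adj] (c : A → K) (σ : A ≃ V) : ℚ :=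
  ∑ i : A, util G c σ i

/-- Agent `i` is exposed: at least one neighbor is occupied by an agent of another type. -/
def exposed (G : SimpleGraph V) [DecidableRel G.Adj] (c : A → K) (σ : A ≃ V) (i : A) : Prop :=
  ((G.neighborFinset (σ i)).filter (fun w => c (σ.symm w) ≠ c i)).Nonempty

instance exposed.instDecidable (G : SimpleGraph V) [DecidableRel G.Adj] (c : A → K)
    (σ : A ≃ V) : DecidablePred (exposed G c σ) :=
  fun _ => inferInstanceAs (Decidable (Finset.Nonempty _))

/-- The degree of integration of an assignment: the number of exposed agents. -/
def DI [Fintype A] (G : SimpleGraph V) [DecidableRel G.Adj] (c : A → K) (σ : A ≃ V) : ℕ :=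
  (univ.filter (fun i : A => exposed G c σ i)).card

end SwapGame

namespace SwapGame

/-- The three-layer tree topology for `k`-swap games: a root, a set `B` of
`k(k-1)-1` middle nodes (children of the root), and `k` leaf children per middle node. -/
inductive TV (k : ℕ) where
  | root : TV k
  | mid : Fin (k*(k-1)-1) → TV k
  | leaf : Fin (k*(k-1)-1) → Fin k → TV k
  deriving DecidableEq, Fintype

def adjT {k : ℕ} : TV k → TV k → Bool
  | .root, .mid _ => true
  | .mid i, .leaf j _ => i == j
  | _, _ => false

abbrev GT (k : ℕ) : SimpleGraph (TV k) := mkGraph (@adjT k)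

/-- Agents: `k` types with `k^2 - 2` agents each; the type of an agent is its first
component. -/
abbrev AgT (k : ℕ) := Fin k × Fin (k^2 - 2)

end SwapGame


/-!
Swap the agent `i` of the minority type `y` sitting on the leaf `(β₁, γ₁)` with the agent `j`
of type `x` sitting on `β₂`. Before the swap `i` sees only `β₁`, of type `x`, so its utility is
`0`; on `β₂` it sees its friend on `(β₂, γ₂)`, so its utility becomes positive. Before the swap
`j` has the foe on `(β₂, γ₂)` among its neighbours, so its utility is below `1`; on the leaf
`(β₁, γ₁)` its only neighbour `β₁` is a friend, so its utility becomes `1`.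
-/

namespace SwapGame

section Swap

variable {A V : Type*} [DecidableEq A] {σ : A ≃ V} {i j : A}

@[simp]
lemma swapA_apply_left : swapA σ i j i = σ j := by
  simp [swapA]

@[simp]
lemma swapA_apply_right : swapA σ i j j = σ i := by
  simp [swapA]

lemma swapA_symm_apply_of_ne {w : V} (hi : σ.symm w ≠ i) (hj : σ.symm w ≠ j) :
    (swapA σ i j).symm w = σ.symm w :=
  Equiv.swap_apply_of_ne_of_ne hi hj

end Swap

section Utility

variable {A V K : Type*} [Fintype V] [DecidableEq K]
  {G : SimpleGraph V} [DecidableRel G.Adj] {c : A → K} {σ : A ≃ V} {i : A}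

lemma util_pos_of_adj {w : V} (hadj : G.Adj (σ i) w) (hw : c (σ.symm w) = c i) :
    0 < util G c σ i := by
  have hmem : w ∈ G.neighborFinset (σ i) := (G.mem_neighborFinset _ _).2 hadj
  have hfriend : w ∈ (G.neighborFinset (σ i)).filter (fun w => c (σ.symm w) = c i) :=
    mem_filter.2 ⟨hmem, hw⟩
  unfold util
  exact div_pos (by exact_mod_cast card_pos.2 ⟨w, hfriend⟩)
    (by exact_mod_cast card_pos.2 ⟨w, hmem⟩)

lemma util_lt_one_of_adj {w : V} (hadj : G.Adj (σ i) w) (hw : c (σ.symm w) ≠ c i) :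
    util G c σ i < 1 := by
  have hmem : w ∈ G.neighborFinset (σ i) := (G.mem_neighborFinset _ _).2 hadj
  have hlt : ((G.neighborFinset (σ i)).filter (fun w => c (σ.symm w) = c i)).card <
      (G.neighborFinset (σ i)).card :=
    card_lt_card (filter_ssubset.2 ⟨w, hmem, hw⟩)
  unfold util
  rw [div_lt_one (by exact_mod_cast card_pos.2 ⟨w, hmem⟩)]
  exact_mod_cast hlt

lemma util_of_neighborFinset_eq_singleton {w : V} (h : G.neighborFinset (σ i) = {w}) :
    util G c σ i = if c (σ.symm w) = c i then 1 else 0 := by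
  unfold util
  rw [h, filter_singleton]
  split_ifs <;> simp

end Utility

section Tree

variable {k : ℕ}

lemma neighborFinset_leaf (b : Fin (k*(k-1)-1)) (γ : Fin k) :
    (GT k).neighborFinset (TV.leaf b γ) = {TV.mid b} := by
  ext w
  rw [SimpleGraph.mem_neighborFinset, mem_singleton]
  cases w <;> simp [GT, mkGraph, adjT]

lemma adj_mid_leaf (b : Fin (k*(k-1)-1)) (γ : Fin k) : (GT k).Adj (TV.mid b) (TV.leaf b γ) := by
  simp [GT, mkGraph, adjT]

end Tree

theorem not_equilibrium_of_same_mid_types_general (k : ℕ) (σ : AgT k ≃ TV k)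
    (b₁ b₂ : Fin (k*(k-1)-1)) (hb : b₁ ≠ b₂)
    (hsame : (σ.symm (TV.mid b₁)).1 = (σ.symm (TV.mid b₂)).1)
    (γ₁ γ₂ : Fin k)
    (hy : (σ.symm (TV.leaf b₁ γ₁)).1 = (σ.symm (TV.leaf b₂ γ₂)).1)
    (hxy : (σ.symm (TV.leaf b₁ γ₁)).1 ≠ (σ.symm (TV.mid b₁)).1) :
    ∃ i j : AgT k, improving (GT k) Prod.fst σ i j := by
  set i := σ.symm (TV.leaf b₁ γ₁)
  set j := σ.symm (TV.mid b₂)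
  have hσi : σ i = TV.leaf b₁ γ₁ := σ.apply_symm_apply _
  have hσj : σ j = TV.mid b₂ := σ.apply_symm_apply _
  have hfix₁ : (swapA σ i j).symm (TV.mid b₁) = σ.symm (TV.mid b₁) :=
    swapA_symm_apply_of_ne (σ.symm.injective.ne (by simp)) (σ.symm.injective.ne (by simpa))
  have hfix₂ : (swapA σ i j).symm (TV.leaf b₂ γ₂) = σ.symm (TV.leaf b₂ γ₂) :=
    swapA_symm_apply_of_ne (σ.symm.injective.ne (by simp [Ne.symm hb]))
      (σ.symm.injective.ne (by simp))
  refine ⟨i, j, ?_, ?_⟩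
  · calc util (GT k) Prod.fst σ i = 0 := by
          rw [util_of_neighborFinset_eq_singleton (hσi ▸ neighborFinset_leaf b₁ γ₁),
            if_neg (Ne.symm hxy)]
      _ < util (GT k) Prod.fst (swapA σ i j) i :=
          util_pos_of_adj (by rw [swapA_apply_left, hσj]; exact adj_mid_leaf b₂ γ₂)
            (by rw [hfix₂, hy])
  · calc util (GT k) Prod.fst σ j < 1 :=
          util_lt_one_of_adj (hσj ▸ adj_mid_leaf b₂ γ₂)
            fun h => hxy (hy.trans (h.trans hsame.symm))
      _ = util (GT k) Prod.fst (swapA σ i j) j := by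
          rw [util_of_neighborFinset_eq_singleton
              (by rw [swapA_apply_right, hσi]; exact neighborFinset_leaf b₁ γ₁),
            if_pos (by rw [hfix₁, hsame])]

/-- Lemma 1 of the paper: in the `k`-swap game (`k ≥ 3`) with `k² − 2`
strategic agents per type on the three-layer tree, if two middle nodes `β₁ ≠ β₂` are
occupied by agents of the same type, and agents of some other common type occupy a leaf
child of `β₁` and a leaf child of `β₂`, then the assignment is not an equilibrium: some
pair of agents can both strictly increase their utility by swapping. -/
theorem not_equilibrium_of_same_mid_types (k : ℕ) (hk : 3 ≤ k) (σ : AgT k ≃ TV k)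
    (b₁ b₂ : Fin (k*(k-1)-1)) (hb : b₁ ≠ b₂)
    (hsame : (σ.symm (TV.mid b₁)).1 = (σ.symm (TV.mid b₂)).1)
    (γ₁ γ₂ : Fin k)
    (hy : (σ.symm (TV.leaf b₁ γ₁)).1 = (σ.symm (TV.leaf b₂ γ₂)).1)
    (hxy : (σ.symm (TV.leaf b₁ γ₁)).1 ≠ (σ.symm (TV.mid b₁)).1) :
    ∃ i j : AgT k, improving (GT k) Prod.fst σ i j :=
  not_equilibrium_of_same_mid_types_general k σ b₁ b₂ hb hsame γ₁ γ₂ hy hxy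

end SwapGame
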